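/- Let (Ω, ℱ, P) be a probability space, d a positive natural number, 𝒜 a finite nonempty set of vectors in ℝᵈ, and π : 𝒜 → ℝ a probability vector (π(a) ≥ 0, Σₐ π(a) = 1) whose Gram matrix Q(π) = Σₐ π(a)·a aᵀ is invertible and satisfies aᵀ Q(π)⁻¹ a ≤ d for all a ∈ 𝒜. Let Δ > 0, δ ∈ (0, 1), χ ∈ ℝ, θ⋆ ∈ ℝᵈ. For each a ∈ 𝒜 set T(a) = ⌈(d·π(a)/(2Δ²))·log(|𝒜|/δ)⌉ if π(a) > 0 and T(a) = 0 otherwise, and suppose T(a) independent observations ζ_{a,s} = χ·⟨θ⋆, a⟩ + η_{a,s} (s = 1,…,T(a)) are made, where the noise variables η_{a,s} are jointly independent and each satisfies E[exp(λ·η_{a,s})] ≤ exp(λ²/8) for all λ ∈ ℝ. Let V = Σₐ T(a)·a aᵀ, assume V is invertible, and let θ̂ = V⁻¹ (Σₐ Σ_{s=1}^{T(a)} ζ_{a,s}·a) be the least-squares estimator. Then with probability at least 1 − 2δ, for every a ∈ 𝒜, |⟨θ̂, a⟩ − χ·⟨θ⋆, a⟩| ≤ Δ. -/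

import Mathlib

open Matrix MeasureTheory ProbabilityTheory

/-!
The error of the least-squares estimate in a direction `a` is `∑ᵢ ⟨xᵢ, V⁻¹ a⟩ ηᵢ`, a weighted sum
of independent `1/2`-sub-Gaussian noises with variance proxy `aᵀ V⁻¹ a / 4`. Rounding the
allocation up gives `V ⪰ c • Q(π)` with `c = d log(|𝒜|/δ) / (2Δ²)`, so by G-optimality
`aᵀ V⁻¹ a ≤ aᵀ Q(π)⁻¹ a / c ≤ 2Δ² / log(|𝒜|/δ)`. Hoeffding's inequality then bounds each
two-sided deviation probability by `2δ/|𝒜|`, and a union bound over `𝒜` concludes.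
-/

namespace Matrix

variable {n : Type*}

def designMatrix (s : Finset (n → ℝ)) (w : (n → ℝ) → ℝ) : Matrix n n ℝ :=
  ∑ b ∈ s, w b • vecMulVec b b

section
variable [Fintype n]

lemma dotProduct_designMatrix_mulVec_self (s : Finset (n → ℝ)) (w : (n → ℝ) → ℝ) (u : n → ℝ) :
    u ⬝ᵥ (designMatrix s w *ᵥ u) = ∑ b ∈ s, w b * (b ⬝ᵥ u) ^ 2 := by
  rw [designMatrix, sum_mulVec, dotProduct_sum]
  refine Finset.sum_congr rfl fun b _ => ?_
  rw [smul_mulVec, vecMulVec_mulVec, op_smul_eq_smul, dotProduct_smul, dotProduct_smul,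
    smul_eq_mul, smul_eq_mul, dotProduct_comm u b]
  ring

lemma posSemidef_designMatrix {s : Finset (n → ℝ)} {w : (n → ℝ) → ℝ}
    (hw : ∀ b ∈ s, 0 ≤ w b) : (designMatrix s w).PosSemidef :=
  posSemidef_sum s fun b hb => by
    simpa using (posSemidef_vecMulVec_self_star b).smul (hw b hb)

end

section
variable [Fintype n] [DecidableEq n]

/- `xᵀ A⁻¹ x = max_u (2 uᵀx - uᵀ A u)`, which is what makes `A ↦ xᵀ A⁻¹ x` antitone in the
Loewner order. -/
lemma PosSemidef.two_mul_dotProduct_sub_le_dotProduct_inv_mulVec {A : Matrix n n ℝ}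
    (hA : A.PosSemidef) (hAu : IsUnit A) (u x : n → ℝ) :
    2 * (u ⬝ᵥ x) - u ⬝ᵥ (A *ᵥ u) ≤ x ⬝ᵥ (A⁻¹ *ᵥ x) := by
  set v := A⁻¹ *ᵥ x
  have hAv : A *ᵥ v = x := by
    rw [mulVec_mulVec, mul_nonsing_inv _ ((isUnit_iff_isUnit_det A).mp hAu), one_mulVec]
  have hsymm : v ⬝ᵥ (A *ᵥ u) = u ⬝ᵥ x := by
    rw [dotProduct_mulVec, ← mulVec_transpose, ← conjTranspose_eq_transpose_of_trivial,
      hA.1.eq, hAv, dotProduct_comm]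
  have hnonneg : 0 ≤ (u - v) ⬝ᵥ (A *ᵥ (u - v)) := by
    simpa using hA.dotProduct_mulVec_nonneg (u - v)
  simp only [mulVec_sub, dotProduct_sub, sub_dotProduct, hAv, hsymm] at hnonneg
  rw [dotProduct_comm x v]
  linarith

lemma PosSemidef.dotProduct_inv_mulVec_le_of_le {A B : Matrix n n ℝ}
    (hA : A.PosSemidef) (hAu : IsUnit A) (hBu : IsUnit B)
    (hAB : ∀ u, u ⬝ᵥ (A *ᵥ u) ≤ u ⬝ᵥ (B *ᵥ u)) (x : n → ℝ) :
    x ⬝ᵥ (B⁻¹ *ᵥ x) ≤ x ⬝ᵥ (A⁻¹ *ᵥ x) := by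
  set u := B⁻¹ *ᵥ x
  have hBu' : B *ᵥ u = x := by
    rw [mulVec_mulVec, mul_nonsing_inv _ ((isUnit_iff_isUnit_det B).mp hBu), one_mulVec]
  calc x ⬝ᵥ u = 2 * (u ⬝ᵥ x) - u ⬝ᵥ (B *ᵥ u) := by rw [hBu', dotProduct_comm]; ring
    _ ≤ 2 * (u ⬝ᵥ x) - u ⬝ᵥ (A *ᵥ u) := by linarith [hAB u]
    _ ≤ x ⬝ᵥ (A⁻¹ *ᵥ x) := hA.two_mul_dotProduct_sub_le_dotProduct_inv_mulVec hAu u x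

lemma dotProduct_inv_designMatrix_mulVec_le {s : Finset (n → ℝ)} {w w' : (n → ℝ) → ℝ} {c : ℝ}
    (hw : ∀ b ∈ s, 0 ≤ w b) (hc : 0 < c) (hww' : ∀ b ∈ s, c * w b ≤ w' b)
    (hQ : IsUnit (designMatrix s w)) (hV : IsUnit (designMatrix s w')) (x : n → ℝ) :
    x ⬝ᵥ ((designMatrix s w')⁻¹ *ᵥ x) ≤ c⁻¹ * (x ⬝ᵥ ((designMatrix s w)⁻¹ *ᵥ x)) := by
  have hQdet := (isUnit_iff_isUnit_det _).mp hQ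
  have hcQ : IsUnit (c • designMatrix s w) := hQ.smul (Units.mk0 c hc.ne')
  have hle : ∀ u, u ⬝ᵥ ((c • designMatrix s w) *ᵥ u) ≤ u ⬝ᵥ (designMatrix s w' *ᵥ u) := by
    intro u
    rw [smul_mulVec, dotProduct_smul, smul_eq_mul, dotProduct_designMatrix_mulVec_self,
      dotProduct_designMatrix_mulVec_self, Finset.mul_sum]
    exact Finset.sum_le_sum fun b hb => by
      rw [← mul_assoc]; exact mul_le_mul_of_nonneg_right (hww' b hb) (sq_nonneg _)
  have hcQpsd : (c • designMatrix s w).PosSemidef := (posSemidef_designMatrix hw).smul hc.le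
  have h := hcQpsd.dotProduct_inv_mulVec_le_of_le hcQ hV hle x
  have := invertibleOfNonzero hc.ne'
  rwa [inv_smul _ c hQdet, invOf_eq_inv, smul_mulVec, dotProduct_smul, smul_eq_mul] at h

lemma dotProduct_inv_designMatrix_mulVec_le_of_forall_le {s : Finset (n → ℝ)}
    {π w : (n → ℝ) → ℝ} {m ε : ℝ} (hπ : ∀ b ∈ s, 0 ≤ π b) (hQ : IsUnit (designMatrix s π))
    (hopt : ∀ a ∈ s, a ⬝ᵥ ((designMatrix s π)⁻¹ *ᵥ a) ≤ m) (hm : 0 < m) (hε : 0 < ε)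
    (hw : ∀ b ∈ s, m * π b / ε ≤ w b) (hV : IsUnit (designMatrix s w)) {a : n → ℝ}
    (ha : a ∈ s) : a ⬝ᵥ ((designMatrix s w)⁻¹ *ᵥ a) ≤ ε :=
  calc a ⬝ᵥ ((designMatrix s w)⁻¹ *ᵥ a)
      ≤ (m / ε)⁻¹ * (a ⬝ᵥ ((designMatrix s π)⁻¹ *ᵥ a)) :=
        dotProduct_inv_designMatrix_mulVec_le hπ (by positivity)
          (fun b hb => by rw [div_mul_eq_mul_div]; exact hw b hb) hQ hV a
    _ ≤ (m / ε)⁻¹ * m := by gcongr; exact hopt a ha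
    _ = ε := by field_simp

end

section Gram

variable {ι : Type*} [Fintype ι]

def gramMatrix (x : ι → n → ℝ) : Matrix n n ℝ :=
  ∑ i, vecMulVec (x i) (x i)

lemma dotProduct_gramMatrix_mulVec [Fintype n] (x : ι → n → ℝ) (u v : n → ℝ) :
    u ⬝ᵥ (gramMatrix x *ᵥ v) = ∑ i, (u ⬝ᵥ x i) * (x i ⬝ᵥ v) := by
  rw [gramMatrix, sum_mulVec, dotProduct_sum]
  refine Finset.sum_congr rfl fun i _ => ?_
  rw [vecMulVec_mulVec, op_smul_eq_smul, dotProduct_smul, smul_eq_mul, mul_comm]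

lemma gramMatrix_sigma_fin (s : Finset (n → ℝ)) (T : (n → ℝ) → ℕ) :
    gramMatrix (fun i : Σ a : s, Fin (T a) => (i.1 : n → ℝ)) = designMatrix s (fun a => T a) := by
  rw [gramMatrix, Fintype.sum_sigma, designMatrix, ← Finset.sum_coe_sort s]
  simp only [Finset.sum_const, Finset.card_univ, Fintype.card_fin, Nat.cast_smul_eq_nsmul]

variable [Fintype n] [DecidableEq n] {x : ι → n → ℝ}

lemma gramMatrix_mulVec_inv_mulVec (hx : IsUnit (gramMatrix x)) (a : n → ℝ) :
    gramMatrix x *ᵥ ((gramMatrix x)⁻¹ *ᵥ a) = a := by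
  rw [mulVec_mulVec, mul_nonsing_inv _ ((isUnit_iff_isUnit_det _).mp hx), one_mulVec]

lemma sum_sq_dotProduct_gramMatrix_inv_mulVec (hx : IsUnit (gramMatrix x)) (a : n → ℝ) :
    ∑ i, (x i ⬝ᵥ ((gramMatrix x)⁻¹ *ᵥ a)) ^ 2 = a ⬝ᵥ ((gramMatrix x)⁻¹ *ᵥ a) := by
  set w := (gramMatrix x)⁻¹ *ᵥ a
  calc ∑ i, (x i ⬝ᵥ w) ^ 2 = w ⬝ᵥ (gramMatrix x *ᵥ w) := by
        rw [dotProduct_gramMatrix_mulVec]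
        exact Finset.sum_congr rfl fun i _ => by rw [dotProduct_comm w, sq]
    _ = a ⬝ᵥ w := by rw [gramMatrix_mulVec_inv_mulVec hx, dotProduct_comm]

lemma leastSquares_dotProduct_sub (hx : IsUnit (gramMatrix x)) (a θ : n → ℝ) (e : ι → ℝ) :
    ((gramMatrix x)⁻¹ *ᵥ ∑ i, (θ ⬝ᵥ x i + e i) • x i) ⬝ᵥ a - θ ⬝ᵥ a =
      ∑ i, (x i ⬝ᵥ ((gramMatrix x)⁻¹ *ᵥ a)) * e i := by
  set w := (gramMatrix x)⁻¹ *ᵥ a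
  have hsymm : ∀ u v, u ⬝ᵥ (gramMatrix x *ᵥ v) = v ⬝ᵥ (gramMatrix x *ᵥ u) := fun u v => by
    rw [dotProduct_gramMatrix_mulVec, dotProduct_gramMatrix_mulVec]
    exact Finset.sum_congr rfl fun i _ => by rw [dotProduct_comm u, dotProduct_comm v]; ring
  have hestimate : ((gramMatrix x)⁻¹ *ᵥ ∑ i, (θ ⬝ᵥ x i + e i) • x i) ⬝ᵥ a =
      ∑ i, (θ ⬝ᵥ x i + e i) * (x i ⬝ᵥ w) := by
    rw [← gramMatrix_mulVec_inv_mulVec hx a, hsymm, gramMatrix_mulVec_inv_mulVec hx,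
      dotProduct_sum]
    exact Finset.sum_congr rfl fun i _ => by
      rw [dotProduct_smul, smul_eq_mul, dotProduct_comm (x i) w]
  have hsignal : ∑ i, (θ ⬝ᵥ x i) * (x i ⬝ᵥ w) = θ ⬝ᵥ a := by
    rw [← dotProduct_gramMatrix_mulVec, gramMatrix_mulVec_inv_mulVec hx]
  rw [hestimate, ← hsignal, ← Finset.sum_sub_distrib]
  exact Finset.sum_congr rfl fun i _ => by ring

end Gram

end Matrix

namespace ProbabilityTheory.HasSubgaussianMGF

open NNReal Real

variable {Ω : Type*} [MeasurableSpace Ω] {μ : Measure Ω} {X : Ω → ℝ} {c : ℝ≥0}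

lemma mono (h : HasSubgaussianMGF X c μ) {c' : ℝ≥0} (hc : c ≤ c') : HasSubgaussianMGF X c' μ where
  integrable_exp_mul := h.integrable_exp_mul
  mgf_le t := (h.mgf_le t).trans (by gcongr)

lemma measureReal_abs_ge_le [IsFiniteMeasure μ] (h : HasSubgaussianMGF X c μ) {ε : ℝ}
    (hε : 0 ≤ ε) : μ.real {ω | ε ≤ |X ω|} ≤ 2 * exp (-ε ^ 2 / (2 * c)) := by
  have hsplit : {ω | ε ≤ |X ω|} = {ω | ε ≤ X ω} ∪ {ω | ε ≤ (-X) ω} := by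
    ext ω
    simp only [Set.mem_ofPred_eq, Set.mem_union, Pi.neg_apply, le_abs']
    constructor <;> rintro (h | h) <;> [right; left; right; left] <;> linarith
  calc μ.real {ω | ε ≤ |X ω|}
      ≤ μ.real {ω | ε ≤ X ω} + μ.real {ω | ε ≤ (-X) ω} := hsplit ▸ measureReal_union_le _ _
    _ ≤ exp (-ε ^ 2 / (2 * c)) + exp (-ε ^ 2 / (2 * c)) :=
        add_le_add (h.measure_ge_le hε) (h.neg.measure_ge_le hε)
    _ = 2 * exp (-ε ^ 2 / (2 * c)) := by ring

variable {ι : Type*} [Fintype ι] {η : ι → Ω → ℝ}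

lemma sum_mul_of_iIndepFun (h_indep : iIndepFun η μ) (h : ∀ i, HasSubgaussianMGF (η i) c μ)
    (w : ι → ℝ) :
    HasSubgaussianMGF (fun ω ↦ ∑ i, w i * η i ω) (∑ i, ⟨w i ^ 2, sq_nonneg (w i)⟩ * c) μ :=
  sum_of_iIndepFun (h_indep.comp (fun i x ↦ w i * x) fun i ↦ measurable_const_mul (w i))
    fun i _ ↦ (h i).const_mul (w i)

/- The proxy `s` may exceed `c * ∑ i, w i ^ 2`: with `s = c * ∑ i, w i ^ 2 = 0` the bound would
degenerate to `2 * exp 0`, since `x / 0 = 0`. -/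
lemma measureReal_abs_sum_mul_ge_le (h_indep : iIndepFun η μ)
    (h : ∀ i, HasSubgaussianMGF (η i) c μ) (w : ι → ℝ) {ε s : ℝ} (hε : 0 ≤ ε)
    (hs : c * ∑ i, w i ^ 2 ≤ s) :
    μ.real {ω | ε ≤ |∑ i, w i * η i ω|} ≤ 2 * exp (-ε ^ 2 / (2 * s)) := by
  have := h_indep.isProbabilityMeasure
  have hs0 : 0 ≤ s := (mul_nonneg c.2 (Finset.sum_nonneg fun i _ ↦ sq_nonneg _)).trans hs
  have hproxy : ∑ i, ⟨w i ^ 2, sq_nonneg (w i)⟩ * c ≤ s.toNNReal := by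
    rw [← NNReal.coe_le_coe, Real.coe_toNNReal _ hs0, NNReal.coe_sum]
    change ∑ i, w i ^ 2 * (c : ℝ) ≤ s
    rwa [← Finset.sum_mul, mul_comm]
  simpa [Real.coe_toNNReal _ hs0] using
    ((sum_mul_of_iIndepFun h_indep h w).mono hproxy).measureReal_abs_ge_le hε

end ProbabilityTheory.HasSubgaussianMGF

open Real NNReal in
lemma ProbabilityTheory.measureReal_abs_leastSquares_sub_ge_le {n ι Ω : Type*} [Fintype n]
    [DecidableEq n] [Fintype ι] [MeasurableSpace Ω] {μ : Measure Ω} {x : ι → n → ℝ}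
    (hx : IsUnit (gramMatrix x)) {η : ι → Ω → ℝ} {c : ℝ≥0} (h_indep : iIndepFun η μ)
    (h : ∀ i, HasSubgaussianMGF (η i) c μ) (θ a : n → ℝ) {ε s : ℝ} (hε : 0 ≤ ε)
    (hs : c * (a ⬝ᵥ ((gramMatrix x)⁻¹ *ᵥ a)) ≤ s) :
    μ.real {ω | ε ≤ |((gramMatrix x)⁻¹ *ᵥ ∑ i, (θ ⬝ᵥ x i + η i ω) • x i) ⬝ᵥ a - θ ⬝ᵥ a|} ≤
      2 * exp (-ε ^ 2 / (2 * s)) := by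
  simp_rw [leastSquares_dotProduct_sub hx]
  exact HasSubgaussianMGF.measureReal_abs_sum_mul_ge_le h_indep h _ hε
    (by rwa [sum_sq_dotProduct_gramMatrix_inv_mulVec hx])

namespace MeasureTheory

lemma ofReal_one_sub_card_mul_le_measure_forall {Ω α : Type*} [MeasurableSpace Ω]
    {μ : Measure Ω} [IsProbabilityMeasure μ] (s : Finset α) (p : α → Ω → Prop) {r : ℝ}
    (h : ∀ a ∈ s, μ.real {ω | ¬ p a ω} ≤ r) :
    ENNReal.ofReal (1 - s.card * r) ≤ μ {ω | ∀ a ∈ s, p a ω} := by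
  set G := {ω | ∀ a ∈ s, p a ω}
  have hcompl : Gᶜ = ⋃ a ∈ s, {ω | ¬ p a ω} := by ext ω; simp [G]
  have hbad : μ.real Gᶜ ≤ s.card * r := by
    rw [hcompl]
    refine (measureReal_biUnion_finset_le s _).trans ?_
    simpa using Finset.sum_le_sum h
  have hcover : 1 ≤ μ.real G + μ.real Gᶜ := by
    rw [← probReal_univ (μ := μ), ← Set.union_compl_self G]
    exact measureReal_union_le _ _
  exact ENNReal.ofReal_le_of_le_toReal (by rw [← measureReal_def]; linarith)

end MeasureTheory

theorem recurrank_per_call_concentration_general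
    {Ω : Type*} [MeasurableSpace Ω] (P : Measure Ω) [IsProbabilityMeasure P]
    (d : ℕ) (hd : 0 < d) (𝒜 : Finset (Fin d → ℝ)) (h𝒜 : 𝒜.Nonempty)
    (π : (Fin d → ℝ) → ℝ) (hπ0 : ∀ a ∈ 𝒜, 0 ≤ π a)
    (hQinv : IsUnit (∑ a ∈ 𝒜, π a • vecMulVec a a))
    (hGopt : ∀ a ∈ 𝒜, a ⬝ᵥ ((∑ b ∈ 𝒜, π b • vecMulVec b b)⁻¹ *ᵥ a) ≤ d)
    (Δ δ χ : ℝ) (hΔ : 0 < Δ) (hδ0 : 0 < δ) (hδ1 : δ < 1)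
    (θst : Fin d → ℝ)
    (T : (Fin d → ℝ) → ℕ)
    (hT : ∀ a, T a =
      if 0 < π a then ⌈(d * π a / (2 * Δ ^ 2)) * Real.log (𝒜.card / δ)⌉₊ else 0)
    (η : (Σ a : {x // x ∈ 𝒜}, Fin (T a.1)) → Ω → ℝ)
    (hindep : iIndepFun η P)
    (hint : ∀ i (l : ℝ), Integrable (fun ω => Real.exp (l * η i ω)) P)
    (hsub : ∀ i (l : ℝ), ∫ ω, Real.exp (l * η i ω) ∂P ≤ Real.exp (l ^ 2 / 8))
    (ζ : (Σ a : {x // x ∈ 𝒜}, Fin (T a.1)) → Ω → ℝ)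
    (hζ : ∀ i ω, ζ i ω = χ * (θst ⬝ᵥ (i.1 : Fin d → ℝ)) + η i ω)
    (V : Matrix (Fin d) (Fin d) ℝ) (hV : V = ∑ a ∈ 𝒜, (T a : ℝ) • vecMulVec a a)
    (hVinv : IsUnit V)
    (θhat : Ω → (Fin d → ℝ))
    (hθhat : ∀ ω, θhat ω =
      V⁻¹ *ᵥ (∑ i : (Σ a : {x // x ∈ 𝒜}, Fin (T a.1)), ζ i ω • (i.1 : Fin d → ℝ))) :
    ENNReal.ofReal (1 - 2 * δ) ≤
      P {ω | ∀ a ∈ 𝒜, |θhat ω ⬝ᵥ a - χ * (θst ⬝ᵥ a)| ≤ Δ} := by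
  set L := Real.log (𝒜.card / δ)
  have hcard : (1 : ℝ) ≤ 𝒜.card := by exact_mod_cast h𝒜.card_pos
  have hL : 0 < L := Real.log_pos ((one_lt_div hδ0).mpr (by linarith))
  set x : (Σ a : {x // x ∈ 𝒜}, Fin (T a.1)) → Fin d → ℝ := fun i => i.1
  have hVd : V = designMatrix 𝒜 (fun a => T a) := hV
  have hVx : V = gramMatrix x := hVd.trans (gramMatrix_sigma_fin 𝒜 T).symm
  have hTπ : ∀ b ∈ 𝒜, d * π b / (2 * Δ ^ 2 / L) ≤ T b := by
    intro b hb
    rw [hT b]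
    split_ifs with hπ
    · exact (le_of_eq (by field_simp)).trans (Nat.le_ceil _)
    · simp [le_antisymm (not_lt.mp hπ) (hπ0 b hb)]
  have hvar : ∀ a ∈ 𝒜, a ⬝ᵥ (V⁻¹ *ᵥ a) ≤ 2 * Δ ^ 2 / L := fun a ha =>
    hVd ▸ dotProduct_inv_designMatrix_mulVec_le_of_forall_le hπ0 hQinv hGopt
      (by positivity) (by positivity) hTπ (hVd ▸ hVinv) ha
  have hestimate : ∀ ω, θhat ω = V⁻¹ *ᵥ ∑ i, ((χ • θst) ⬝ᵥ x i + η i ω) • x i := by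
    simp only [hθhat, hζ, smul_dotProduct, smul_eq_mul, x, implies_true]
  have hη : ∀ i, HasSubgaussianMGF (η i) (1 / 4) P := fun i =>
    ⟨hint i, fun t => (hsub i t).trans_eq (by congr 1; push_cast; ring)⟩
  refine (le_of_eq (by congr 1; field_simp)).trans
    (ofReal_one_sub_card_mul_le_measure_forall 𝒜 _ (r := 2 * δ / 𝒜.card) fun a ha => ?_)
  calc P.real {ω | ¬ |θhat ω ⬝ᵥ a - χ * (θst ⬝ᵥ a)| ≤ Δ}
      ≤ P.real {ω | Δ ≤ |θhat ω ⬝ᵥ a - (χ • θst) ⬝ᵥ a|} :=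
        measureReal_mono fun ω hω => by
          simp only [Set.mem_ofPred_eq, not_le, smul_dotProduct, smul_eq_mul] at hω ⊢
          exact hω.le
    _ ≤ 2 * Real.exp (-Δ ^ 2 / (2 * (Δ ^ 2 / (2 * L)))) := by
        simp_rw [hestimate, hVx]
        refine measureReal_abs_leastSquares_sub_ge_le (hVx ▸ hVinv) hindep hη _ a hΔ.le ?_
        have hhalf : 1 / 4 * (2 * Δ ^ 2 / L) = Δ ^ 2 / (2 * L) := by field_simp; ring
        push_cast
        linarith [hVx ▸ hvar a ha]
    _ = 2 * δ / 𝒜.card := by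
        rw [show -Δ ^ 2 / (2 * (Δ ^ 2 / (2 * L))) = -L by field_simp, Real.exp_neg,
          Real.exp_log (by positivity)]
        field_simp

/-- per-call content of Lemma 1 of the paper. Given a G-optimal
design `π` on a finite set `𝒜` of vectors (so `aᵀ Q(π)⁻¹ a ≤ d` on `𝒜`), each
item `a` observed `T(a) = ⌈(d·π(a)/(2Δ²))·log(|𝒜|/δ)⌉` times with independent
1/2-subgaussian noise, the least-squares estimator `θ̂` of `χ·θ⋆` satisfies
`|⟨θ̂, a⟩ − χ·⟨θ⋆, a⟩| ≤ Δ` for all `a ∈ 𝒜` with probability at least `1 − 2δ`. -/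
theorem recurrank_per_call_concentration
    {Ω : Type*} [MeasurableSpace Ω] (P : Measure Ω) [IsProbabilityMeasure P]
    (d : ℕ) (hd : 0 < d) (𝒜 : Finset (Fin d → ℝ)) (h𝒜 : 𝒜.Nonempty)
    (π : (Fin d → ℝ) → ℝ) (hπ0 : ∀ a ∈ 𝒜, 0 ≤ π a) (hπ1 : ∑ a ∈ 𝒜, π a = 1)
    (hQinv : IsUnit (∑ a ∈ 𝒜, π a • vecMulVec a a))
    (hGopt : ∀ a ∈ 𝒜, a ⬝ᵥ ((∑ b ∈ 𝒜, π b • vecMulVec b b)⁻¹ *ᵥ a) ≤ d)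
    (Δ δ χ : ℝ) (hΔ : 0 < Δ) (hδ0 : 0 < δ) (hδ1 : δ < 1)
    (θst : Fin d → ℝ)
    (T : (Fin d → ℝ) → ℕ)
    (hT : ∀ a, T a =
      if 0 < π a then ⌈(d * π a / (2 * Δ ^ 2)) * Real.log (𝒜.card / δ)⌉₊ else 0)
    (η : (Σ a : {x // x ∈ 𝒜}, Fin (T a.1)) → Ω → ℝ)
    (hmeas : ∀ i, Measurable (η i))
    (hindep : iIndepFun η P)
    (hint : ∀ i (l : ℝ), Integrable (fun ω => Real.exp (l * η i ω)) P)
    (hsub : ∀ i (l : ℝ), ∫ ω, Real.exp (l * η i ω) ∂P ≤ Real.exp (l ^ 2 / 8))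
    (ζ : (Σ a : {x // x ∈ 𝒜}, Fin (T a.1)) → Ω → ℝ)
    (hζ : ∀ i ω, ζ i ω = χ * (θst ⬝ᵥ (i.1 : Fin d → ℝ)) + η i ω)
    (V : Matrix (Fin d) (Fin d) ℝ) (hV : V = ∑ a ∈ 𝒜, (T a : ℝ) • vecMulVec a a)
    (hVinv : IsUnit V)
    (θhat : Ω → (Fin d → ℝ))
    (hθhat : ∀ ω, θhat ω =
      V⁻¹ *ᵥ (∑ i : (Σ a : {x // x ∈ 𝒜}, Fin (T a.1)), ζ i ω • (i.1 : Fin d → ℝ))) :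
    ENNReal.ofReal (1 - 2 * δ) ≤
      P {ω | ∀ a ∈ 𝒜, |θhat ω ⬝ᵥ a - χ * (θst ⬝ᵥ a)| ≤ Δ} :=
  recurrank_per_call_concentration_general P d hd 𝒜 h𝒜 π hπ0 hQinv hGopt Δ δ χ hΔ hδ0 hδ1 θst T hT η
    hindep hint hsub ζ hζ V hV hVinv θhat hθhat
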